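/- With notation as above (ψ > 0, a,b,c > 0 with a+b+c=1, f and h as defined on 𝒟), the Hessian of f + h at (x,y) ∈ 𝒟 equals [[−T − ψ/(x(ψ+x)), T], [T, −S − T]], where S = 1/((2−y)(1−y)) + 1/(y(1+y)) and T = a/((a+b−x+y)(b−x+y)) + c/((c+x−y)(x−y)). Moreover S ≥ 1 and T ≥ 0 on 𝒟. -/

import Mathlib

/-!
Every summand of `f + h` has the form `± ℓ log ℓ` with `ℓ` affine in `(x, y)`, and on `𝒟` every such
`ℓ` is positive. The first partial derivatives are therefore sums of `± log ℓ`, and the second ones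
sums of `± ∂ℓ ∂'ℓ / ℓ`; these partial fractions recombine into `S` and `T`. Since `𝒟` is open, the
first partial derivatives agree with the explicit formulas near `(x, y)`, which is what the iterated
`deriv`s in `hessG` see. The bounds hold because `(2 − y)(1 − y)` and `y(1 + y)` are at most `2` on
`0 < y < 1`, and all denominators of `T` are positive on `𝒟`.
-/

open Real

/-- The entropy-type function `h(x,y)` on the domain `𝒟`. -/
noncomputable def hFn (a b c x y : ℝ) : ℝ :=
  (2 - y) * Real.log (2 - y) - (1 - y) * Real.log (1 - y) + (1 + y) * Real.log (1 + y) -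
    y * Real.log y + (c + x - y) * Real.log (c + x - y) - c * Real.log c -
    (x - y) * Real.log (x - y) + (a + b + y - x) * Real.log (a + b + y - x) -
    a * Real.log a - (b + y - x) * Real.log (b + y - x)

/-- The function `f(x) = (ψ+x)log(ψ+x) − ψ log ψ − x log x`. -/
noncomputable def fFn (ψ x : ℝ) : ℝ :=
  (ψ + x) * Real.log (ψ + x) - ψ * Real.log ψ - x * Real.log x

/-- `g = f + h`. -/
noncomputable def gFn (a b c ψ x y : ℝ) : ℝ := fFn ψ x + hFn a b c x y

/-- Membership in the domain `𝒟 = {(x,y) : 0 < x, 0 < y, x < 1+b, x−b < y < min(x,1)}`. -/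
def memD (b x y : ℝ) : Prop :=
  0 < x ∧ 0 < y ∧ x < 1 + b ∧ x - b < y ∧ y < x ∧ y < 1

/-- The Hessian matrix of `g = f + h` at `(x, y)`, with entries given by iterated `deriv`s. -/
noncomputable def hessG (a b c ψ x y : ℝ) : Matrix (Fin 2) (Fin 2) ℝ :=
  !![deriv (fun t => deriv (fun s => gFn a b c ψ s y) t) x,
     deriv (fun t => deriv (fun s => gFn a b c ψ s t) x) y;
     deriv (fun t => deriv (fun s => gFn a b c ψ t s) y) x,
     deriv (fun t => deriv (fun s => gFn a b c ψ x s) t) y]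

open Topology

theorem HasDerivAt.mul_log {f : ℝ → ℝ} {f' x : ℝ} (hf : HasDerivAt f f' x) (hx : f x ≠ 0) :
    HasDerivAt (fun t => f t * Real.log (f t)) (f' * (Real.log (f x) + 1)) x :=
  (hf.mul (hf.log hx)).congr_deriv (by field_simp)

namespace memD

variable {b x y : ℝ}

theorem isOpen_setOf (b : ℝ) : IsOpen {p : ℝ × ℝ | memD b p.1 p.2} := by
  simp only [memD, Set.ofPred_and]
  apply_rules [IsOpen.inter, isOpen_lt] <;> fun_prop

theorem eventually_fst (h : memD b x y) : ∀ᶠ t in 𝓝 x, memD b t y :=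
  (Continuous.prodMk_left y).continuousAt.preimage_mem_nhds ((isOpen_setOf b).mem_nhds h)

theorem eventually_snd (h : memD b x y) : ∀ᶠ t in 𝓝 y, memD b x t :=
  (Continuous.prodMk_right x).continuousAt.preimage_mem_nhds ((isOpen_setOf b).mem_nhds h)

end memD

noncomputable def gFnDerivFst (a b c ψ x y : ℝ) : ℝ :=
  log (ψ + x) - log x + log (c + x - y) - log (x - y) - log (a + b + y - x) + log (b + y - x)

noncomputable def gFnDerivSnd (a b c x y : ℝ) : ℝ :=
  -log (2 - y) + log (1 - y) + log (1 + y) - log y - log (c + x - y) + log (x - y) +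
    log (a + b + y - x) - log (b + y - x)

noncomputable def hessS (y : ℝ) : ℝ := 1 / ((2 - y) * (1 - y)) + 1 / (y * (1 + y))

noncomputable def hessT (a b c x y : ℝ) : ℝ :=
  a / ((a + b - x + y) * (b - x + y)) + c / ((c + x - y) * (x - y))

section Derivatives

variable {a b c ψ x y : ℝ}

theorem hasDerivAt_gFn_fst (ha : 0 < a) (hc : 0 < c) (hψ : 0 < ψ) (h : memD b x y) :
    HasDerivAt (fun s => gFn a b c ψ s y) (gFnDerivFst a b c ψ x y) x := by
  obtain ⟨hx, -, -, hbx, hyx, -⟩ := h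
  have hid := hasDerivAt_id' x
  have hf := ((((hid.const_add ψ).mul_log (by linarith)).sub_const (ψ * log ψ)).sub
    (hid.mul_log hx.ne'))
  have hh := ((((((hasDerivAt_const x ((2 - y) * log (2 - y) - (1 - y) * log (1 - y) +
      (1 + y) * log (1 + y) - y * log y)).add
    (((hid.const_add c).sub_const y).mul_log (by linarith))).sub_const (c * log c)).sub
    ((hid.sub_const y).mul_log (by linarith))).add
    ((hid.const_sub (a + b + y)).mul_log (by linarith))).sub_const (a * log a)).sub
    ((hid.const_sub (b + y)).mul_log (by linarith))
  exact (hf.add hh).congr_deriv (by unfold gFnDerivFst; ring)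

theorem hasDerivAt_gFn_snd (ha : 0 < a) (hc : 0 < c) (h : memD b x y) :
    HasDerivAt (fun s => gFn a b c ψ x s) (gFnDerivSnd a b c x y) y := by
  obtain ⟨-, hy, -, hbx, hyx, hy1⟩ := h
  have hid := hasDerivAt_id' y
  have hh := ((((((((((hid.const_sub 2).mul_log (by linarith)).sub
      ((hid.const_sub 1).mul_log (by linarith))).add
      ((hid.const_add 1).mul_log (by linarith))).sub (hid.mul_log hy.ne')).add
    ((hid.const_sub (c + x)).mul_log (by linarith))).sub_const (c * log c)).sub
    ((hid.const_sub x).mul_log (by linarith))).add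
    (((hid.const_add (a + b)).sub_const x).mul_log (by linarith))).sub_const (a * log a)).sub
    (((hid.const_add b).sub_const x).mul_log (by linarith))
  exact (hh.const_add (fFn ψ x)).congr_deriv (by unfold gFnDerivSnd; ring)

theorem memD.hessT_eq_sum_inv (ha : 0 < a) (hc : 0 < c) (h : memD b x y) :
    hessT a b c x y = (x - y)⁻¹ - (c + x - y)⁻¹ + (b + y - x)⁻¹ - (a + b + y - x)⁻¹ := by
  obtain ⟨-, -, -, hbx, hyx, -⟩ := h
  have h₁ : x - y ≠ 0 := by linarith
  have h₂ : c + x - y ≠ 0 := by linarith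
  have h₃ : b + y - x ≠ 0 := by linarith
  have h₄ : a + b + y - x ≠ 0 := by linarith
  rw [hessT, show a + b - x + y = a + b + y - x by ring, show b - x + y = b + y - x by ring]
  field_simp
  ring

theorem hessS_eq_sum_inv (hy₀ : 0 < y) (hy₁ : y < 1) :
    hessS y = (1 - y)⁻¹ - (2 - y)⁻¹ + y⁻¹ - (1 + y)⁻¹ := by
  rw [add_sub_assoc, inv_sub_inv (by linarith) (by linarith), inv_sub_inv hy₀.ne' (by linarith),
    hessS]
  ring

theorem hasDerivAt_gFnDerivFst_fst (ha : 0 < a) (hc : 0 < c) (hψ : 0 < ψ) (h : memD b x y) :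
    HasDerivAt (fun s => gFnDerivFst a b c ψ s y) (-hessT a b c x y - ψ / (x * (ψ + x))) x := by
  have hψx : ψ / (x * (ψ + x)) = x⁻¹ - (ψ + x)⁻¹ := by
    rw [inv_sub_inv h.1.ne' (by linarith [h.1])]
    ring
  rw [h.hessT_eq_sum_inv ha hc, hψx]
  obtain ⟨hx, -, -, hbx, hyx, -⟩ := h
  have hid := hasDerivAt_id' x
  have hd := ((((((hid.const_add ψ).log (by linarith)).sub (hid.log hx.ne')).add
    (((hid.const_add c).sub_const y).log (by linarith))).sub
    ((hid.sub_const y).log (by linarith))).sub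
    ((hid.const_sub (a + b + y)).log (by linarith))).add
    ((hid.const_sub (b + y)).log (by linarith))
  exact hd.congr_deriv (by ring)

theorem hasDerivAt_gFnDerivFst_snd (ha : 0 < a) (hc : 0 < c) (h : memD b x y) :
    HasDerivAt (fun t => gFnDerivFst a b c ψ x t) (hessT a b c x y) y := by
  rw [h.hessT_eq_sum_inv ha hc]
  obtain ⟨-, -, -, hbx, hyx, -⟩ := h
  have hid := hasDerivAt_id' y
  have hd := (((((hid.const_sub (c + x)).log (by linarith)).const_add
    (log (ψ + x) - log x)).sub ((hid.const_sub x).log (by linarith))).sub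
    (((hid.const_add (a + b)).sub_const x).log (by linarith))).add
    (((hid.const_add b).sub_const x).log (by linarith))
  exact hd.congr_deriv (by ring)

theorem hasDerivAt_gFnDerivSnd_fst (ha : 0 < a) (hc : 0 < c) (h : memD b x y) :
    HasDerivAt (fun s => gFnDerivSnd a b c s y) (hessT a b c x y) x := by
  rw [h.hessT_eq_sum_inv ha hc]
  obtain ⟨-, -, -, hbx, hyx, -⟩ := h
  have hid := hasDerivAt_id' x
  have hd := ((((((hid.const_add c).sub_const y).log (by linarith)).const_sub
    (-log (2 - y) + log (1 - y) + log (1 + y) - log y)).add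
    ((hid.sub_const y).log (by linarith))).add
    ((hid.const_sub (a + b + y)).log (by linarith))).sub
    ((hid.const_sub (b + y)).log (by linarith))
  exact hd.congr_deriv (by ring)

theorem hasDerivAt_gFnDerivSnd_snd (ha : 0 < a) (hc : 0 < c) (h : memD b x y) :
    HasDerivAt (fun t => gFnDerivSnd a b c x t) (-hessS y - hessT a b c x y) y := by
  rw [h.hessT_eq_sum_inv ha hc]
  obtain ⟨-, hy, -, hbx, hyx, hy1⟩ := h
  rw [hessS_eq_sum_inv hy hy1]
  have hid := hasDerivAt_id' y
  have hd := ((((((((hid.const_sub 2).log (by linarith)).neg.add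
    ((hid.const_sub 1).log (by linarith))).add ((hid.const_add 1).log (by linarith))).sub
    (hid.log hy.ne')).sub ((hid.const_sub (c + x)).log (by linarith))).add
    ((hid.const_sub x).log (by linarith))).add
    (((hid.const_add (a + b)).sub_const x).log (by linarith))).sub
    (((hid.const_add b).sub_const x).log (by linarith))
  exact hd.congr_deriv (by ring)

end Derivatives

theorem one_le_hessS {y : ℝ} (hy₀ : 0 < y) (hy₁ : y < 1) : 1 ≤ hessS y := by
  have h₁ : 1 / 2 ≤ 1 / ((2 - y) * (1 - y)) :=
    one_div_le_one_div_of_le (by nlinarith) (by nlinarith)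
  have h₂ : 1 / 2 ≤ 1 / (y * (1 + y)) := one_div_le_one_div_of_le (by positivity) (by nlinarith)
  rw [hessS]
  linarith

theorem memD.hessT_nonneg {a b c x y : ℝ} (ha : 0 ≤ a) (hc : 0 ≤ c) (h : memD b x y) :
    0 ≤ hessT a b c x y := by
  obtain ⟨-, -, -, hbx, hyx, -⟩ := h
  have hT₁ : 0 < (a + b - x + y) * (b - x + y) := by apply mul_pos <;> linarith
  have hT₂ : 0 < (c + x - y) * (x - y) := by apply mul_pos <;> linarith
  exact add_nonneg (div_nonneg ha hT₁.le) (div_nonneg hc hT₂.le)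

theorem hessG_eq {a b c ψ x y : ℝ} (ha : 0 < a) (hc : 0 < c) (hψ : 0 < ψ) (h : memD b x y) :
    hessG a b c ψ x y = !![-hessT a b c x y - ψ / (x * (ψ + x)), hessT a b c x y;
      hessT a b c x y, -hessS y - hessT a b c x y] := by
  have hxx : (fun t => deriv (fun s => gFn a b c ψ s y) t) =ᶠ[𝓝 x]
      fun t => gFnDerivFst a b c ψ t y :=
    h.eventually_fst.mono fun t ht => (hasDerivAt_gFn_fst ha hc hψ ht).deriv
  have hxy : (fun t => deriv (fun s => gFn a b c ψ s t) x) =ᶠ[𝓝 y]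
      fun t => gFnDerivFst a b c ψ x t :=
    h.eventually_snd.mono fun t ht => (hasDerivAt_gFn_fst ha hc hψ ht).deriv
  have hyx : (fun t => deriv (fun s => gFn a b c ψ t s) y) =ᶠ[𝓝 x]
      fun t => gFnDerivSnd a b c t y :=
    h.eventually_fst.mono fun t ht => (hasDerivAt_gFn_snd ha hc ht).deriv
  have hyy : (fun t => deriv (fun s => gFn a b c ψ x s) t) =ᶠ[𝓝 y]
      fun t => gFnDerivSnd a b c x t :=
    h.eventually_snd.mono fun t ht => (hasDerivAt_gFn_snd ha hc ht).deriv
  rw [hessG, hxx.deriv_eq, hxy.deriv_eq, hyx.deriv_eq, hyy.deriv_eq,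
    (hasDerivAt_gFnDerivFst_fst ha hc hψ h).deriv, (hasDerivAt_gFnDerivFst_snd ha hc h).deriv,
    (hasDerivAt_gFnDerivSnd_fst ha hc h).deriv, (hasDerivAt_gFnDerivSnd_snd ha hc h).deriv]

theorem hessian_explicit_general (a b c ψ : ℝ) (ha : 0 < a) (hc : 0 < c)
    (hψ : 0 < ψ) (x y : ℝ) (hxy : memD b x y)
    (S T : ℝ)
    (hS : S = 1 / ((2 - y) * (1 - y)) + 1 / (y * (1 + y)))
    (hT : T = a / ((a + b - x + y) * (b - x + y)) + c / ((c + x - y) * (x - y))) :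
    hessG a b c ψ x y = !![-T - ψ / (x * (ψ + x)), T; T, -S - T] ∧ 1 ≤ S ∧ 0 ≤ T := by
  obtain rfl : S = hessS y := hS
  obtain rfl : T = hessT a b c x y := hT
  exact ⟨hessG_eq ha hc hψ hxy, one_le_hessS hxy.2.1 hxy.2.2.2.2.2,
    hxy.hessT_nonneg ha.le hc.le⟩

/-- The Hessian of `f + h` at `(x,y) ∈ 𝒟` equals
`[[−T − ψ/(x(ψ+x)), T], [T, −S − T]]` with
`S = 1/((2−y)(1−y)) + 1/(y(1+y))` and
`T = a/((a+b−x+y)(b−x+y)) + c/((c+x−y)(x−y))`; moreover `S ≥ 1` and `T ≥ 0`. -/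
theorem hessian_explicit (a b c ψ : ℝ) (ha : 0 < a) (hb : 0 < b) (hc : 0 < c)
    (habc : a + b + c = 1) (hψ : 0 < ψ) (x y : ℝ) (hxy : memD b x y)
    (S T : ℝ)
    (hS : S = 1 / ((2 - y) * (1 - y)) + 1 / (y * (1 + y)))
    (hT : T = a / ((a + b - x + y) * (b - x + y)) + c / ((c + x - y) * (x - y))) :
    hessG a b c ψ x y = !![-T - ψ / (x * (ψ + x)), T; T, -S - T] ∧ 1 ≤ S ∧ 0 ≤ T :=
  hessian_explicit_general a b c ψ ha hc hψ x y hxy S T hS hT
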